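/- Let κ > 0 and T > 0 be real numbers, and define η₀ : (0,T) → ℝ by η₀(t) = κ/(1 - e^{-2κ(T-t)}) + √(κ/(2t)). Then η₀ is differentiable on (0,T) and satisfies the ordinary differential inequality η₀'(t) ≤ 2 η₀(t)² - 2κ η₀(t) - κ/t for all t ∈ (0,T). -/

import Mathlib

/-!
`η_{κ,T}(t) = κ/(1 - e^{-2κ(T-t)})` solves the Riccati equation `η' = 2η² - 2κη` exactly, and
`g(t) = √(κ/(2t))` satisfies `2g² = κ/t` and `g' = -g/(2t) ≤ 0`. Expanding the square,
`2(η + g)² - 2κ(η + g) - κ/t = η' + 2g(2η - κ)`, so the inequality reduces to `η ≥ κ`,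
which holds because `0 < 1 - e^{-2κ(T-t)} ≤ 1` for `t < T`.
-/

open Real

/-- The correction factor `η_{κ,T}` of the matrix Li–Yau–Hamilton estimate. -/
noncomputable def etaCorrection (κ T t : ℝ) : ℝ :=
  κ / (1 - exp (-2 * κ * (T - t)))

lemma exp_neg_two_mul_lt_one {κ T t : ℝ} (hκ : 0 < κ) (ht : t < T) :
    exp (-2 * κ * (T - t)) < 1 :=
  exp_lt_one_iff.mpr (by nlinarith)

lemma hasDerivAt_etaCorrection {κ T t : ℝ} (hE : exp (-2 * κ * (T - t)) ≠ 1) :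
    HasDerivAt (etaCorrection κ T)
      (2 * etaCorrection κ T t ^ 2 - 2 * κ * etaCorrection κ T t) t := by
  have hden : 1 - exp (-2 * κ * (T - t)) ≠ 0 := sub_ne_zero.mpr hE.symm
  have hexp : HasDerivAt (fun s => exp (-2 * κ * (T - s)))
      (exp (-2 * κ * (T - t)) * (-2 * κ * -1)) t :=
    (((hasDerivAt_id' t).const_sub T).const_mul (-2 * κ)).exp
  refine ((hasDerivAt_const t κ).fun_div (hexp.const_sub 1) hden).congr_deriv ?_
  unfold etaCorrection
  field_simp
  ring

lemma le_etaCorrection {κ T t : ℝ} (hκ : 0 < κ) (ht : t < T) : κ ≤ etaCorrection κ T t := by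
  have hE := exp_neg_two_mul_lt_one hκ ht
  rw [etaCorrection, le_div_iff₀ (by linarith)]
  nlinarith [exp_pos (-2 * κ * (T - t))]

lemma hasDerivAt_sqrt_div_two_mul {κ t : ℝ} (hκ : 0 < κ) (ht : 0 < t) :
    HasDerivAt (fun s => √(κ / (2 * s))) (-√(κ / (2 * t)) / (2 * t)) t := by
  have hx : 0 < κ / (2 * t) := by positivity
  have hinner : HasDerivAt (fun s => κ / (2 * s)) (-(κ * 2) / (2 * t) ^ 2) t := by
    simpa using (hasDerivAt_const t κ).fun_div ((hasDerivAt_id t).const_mul 2) (by positivity)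
  refine ((hasDerivAt_sqrt hx.ne').comp t hinner).congr_deriv ?_
  have hs : √(κ / (2 * t)) ^ 2 = κ / (2 * t) := sq_sqrt hx.le
  field_simp
  rw [hs]
  field_simp

lemma riccati_add_sqrt_le {κ η g t : ℝ} (hκ : 0 ≤ κ) (hη : κ ≤ η) (hg : 0 ≤ g) (ht : 0 < t)
    (hg2 : g ^ 2 = κ / (2 * t)) :
    2 * η ^ 2 - 2 * κ * η + -g / (2 * t) ≤ 2 * (η + g) ^ 2 - 2 * κ * (η + g) - κ / t := by
  have hκt : κ / t = 2 * g ^ 2 := by rw [hg2]; field_simp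
  have hdecay : -g / (2 * t) ≤ 0 := div_nonpos_of_nonpos_of_nonneg (by linarith) (by linarith)
  nlinarith [mul_nonneg hg (by linarith : 0 ≤ 2 * η - κ)]

theorem eta_zero_ODE_inequality_general (κ T : ℝ) (hκ : 0 < κ) :
    ∀ t ∈ Set.Ioo (0 : ℝ) T,
      ∃ d : ℝ,
        HasDerivAt
          (fun s : ℝ => κ / (1 - Real.exp (-2 * κ * (T - s))) + Real.sqrt (κ / (2 * s))) d t ∧
        d ≤ 2 * (κ / (1 - Real.exp (-2 * κ * (T - t))) + Real.sqrt (κ / (2 * t)))^2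
            - 2 * κ * (κ / (1 - Real.exp (-2 * κ * (T - t))) + Real.sqrt (κ / (2 * t)))
            - κ / t := by
  rintro t ⟨ht0, htT⟩
  have hη := hasDerivAt_etaCorrection (exp_neg_two_mul_lt_one hκ htT).ne
  refine ⟨_, hη.add (hasDerivAt_sqrt_div_two_mul hκ ht0), ?_⟩
  exact riccati_add_sqrt_le hκ.le (le_etaCorrection hκ htT) (sqrt_nonneg _) ht0
    (sq_sqrt (by positivity))

/-- The explicit function `η₀(t) = κ/(1 - e^{-2κ(T-t)}) + √(κ/(2t))` of Corollary 1.9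
is differentiable on `(0,T)` and satisfies `η₀' ≤ 2η₀² - 2κη₀ - κ/t` there. -/
theorem eta_zero_ODE_inequality (κ T : ℝ) (hκ : 0 < κ) (hT : 0 < T) :
    ∀ t ∈ Set.Ioo (0 : ℝ) T,
      ∃ d : ℝ,
        HasDerivAt
          (fun s : ℝ => κ / (1 - Real.exp (-2 * κ * (T - s))) + Real.sqrt (κ / (2 * s))) d t ∧
        d ≤ 2 * (κ / (1 - Real.exp (-2 * κ * (T - t))) + Real.sqrt (κ / (2 * t)))^2
            - 2 * κ * (κ / (1 - Real.exp (-2 * κ * (T - t))) + Real.sqrt (κ / (2 * t)))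
            - κ / t :=
  eta_zero_ODE_inequality_general κ T hκ
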